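/- For a connected graph G on n vertices with transmission σ(G) (the sum of distances over all unordered vertex pairs), μ_α(G) ≥ 2σ(G)/n, with equality if and only if G is transmission regular (all vertex transmissions equal). -/

import Mathlib

set_option linter.unusedSectionVars false


open Finset Matrix

namespace DistAlpha

variable {V : Type*} [Fintype V] [DecidableEq V]

/-- The distance matrix of a graph, with real entries. -/
noncomputable def distMatrix (G : SimpleGraph V) : Matrix V V ℝ :=
  fun u v => (G.dist u v : ℝ)

/-- The transmission of a vertex: the sum of distances to all vertices. -/
noncomputable def transmission (G : SimpleGraph V) (u : V) : ℝ :=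
  ∑ v, (G.dist u v : ℝ)

/-- The matrix `D_α = α T + (1-α) D`. -/
noncomputable def Dalpha (G : SimpleGraph V) (α : ℝ) : Matrix V V ℝ :=
  α • Matrix.diagonal (transmission G) + (1 - α) • distMatrix G

/-- The distance α-spectral radius: the largest (real) eigenvalue of `D_α`. -/
noncomputable def muAlpha (G : SimpleGraph V) (α : ℝ) : ℝ :=
  sSup (spectrum ℝ (Dalpha G α))

/-- The transmission of a graph: sum of distances over unordered pairs. -/
noncomputable def sigma (G : SimpleGraph V) : ℝ :=
  (∑ u, ∑ v, (G.dist u v : ℝ)) / 2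

/-- A graph is transmission regular if all vertex transmissions are equal. -/
def TransmissionRegular (G : SimpleGraph V) : Prop :=
  ∀ u v : V, transmission G u = transmission G v

/-! ### Auxiliary lemmas -/

lemma transmission_nonneg (G : SimpleGraph V) (u : V) : 0 ≤ transmission G u :=
  Finset.sum_nonneg fun _ _ => by positivity

lemma Dalpha_entry_nonneg (G : SimpleGraph V) {α : ℝ} (hα0 : 0 ≤ α) (hα1 : α ≤ 1)
    (u v : V) : 0 ≤ Dalpha G α u v := by
  simp only [Dalpha, Matrix.add_apply, Matrix.smul_apply, smul_eq_mul, distMatrix]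
  have h1 : 0 ≤ Matrix.diagonal (transmission G) u v := by
    rcases eq_or_ne u v with rfl | h
    · simpa using transmission_nonneg G u
    · simp [Matrix.diagonal_apply_ne _ h]
  have h2 : (0:ℝ) ≤ (G.dist u v : ℝ) := by positivity
  nlinarith

lemma Dalpha_symm (G : SimpleGraph V) (α : ℝ) (u v : V) :
    Dalpha G α u v = Dalpha G α v u := by
  simp only [Dalpha, Matrix.add_apply, Matrix.smul_apply, smul_eq_mul, distMatrix]
  rw [Matrix.diagonal_apply, Matrix.diagonal_apply, SimpleGraph.dist_comm]
  by_cases h : u = v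
  · subst h; simp
  · simp [h, Ne.symm h]

lemma Dalpha_rowsum (G : SimpleGraph V) (α : ℝ) (u : V) :
    ∑ v, Dalpha G α u v = transmission G u := by
  simp only [Dalpha, Matrix.add_apply, Matrix.smul_apply, smul_eq_mul, distMatrix,
    Finset.sum_add_distrib, ← Finset.mul_sum]
  have h1 : ∑ v, Matrix.diagonal (transmission G) u v = transmission G u := by
    simp [Matrix.diagonal_apply, Finset.sum_ite_eq]
  rw [h1]
  have h2 : ∑ v, (G.dist u v : ℝ) = transmission G u := rfl
  rw [h2]; ring

lemma Dalpha_isHermitian (G : SimpleGraph V) (α : ℝ) : (Dalpha G α).IsHermitian := by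
  ext u v
  simp only [Matrix.conjTranspose_apply, star_trivial]
  exact Dalpha_symm G α v u

/-- The basic quadratic-form bound `x ⬝ (M x) ≤ ∑ T(u) x(u)²`. -/
lemma Dalpha_quad_le (G : SimpleGraph V) {α : ℝ} (hα0 : 0 ≤ α) (hα1 : α ≤ 1)
    (x : V → ℝ) :
    x ⬝ᵥ (Dalpha G α *ᵥ x) ≤ ∑ u, transmission G u * x u ^ 2 := by
  set M := Dalpha G α with hM
  have hdot : x ⬝ᵥ (M *ᵥ x) = ∑ u, ∑ v, M u v * (x u * x v) := by
    simp only [dotProduct, mulVec, Finset.mul_sum]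
    refine Finset.sum_congr rfl fun u _ => Finset.sum_congr rfl fun v _ => by ring
  rw [hdot]
  have step1 : ∑ u, ∑ v, M u v * (x u * x v)
      ≤ ∑ u, ∑ v, M u v * ((x u ^ 2 + x v ^ 2) / 2) := by
    refine Finset.sum_le_sum fun u _ => Finset.sum_le_sum fun v _ => ?_
    have hMnn : 0 ≤ M u v := Dalpha_entry_nonneg G hα0 hα1 u v
    have : x u * x v ≤ (x u ^ 2 + x v ^ 2) / 2 := by nlinarith [sq_nonneg (x u - x v)]
    exact mul_le_mul_of_nonneg_left this hMnn
  refine step1.trans_eq ?_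
  have hA : ∑ u, ∑ v, M u v * x u ^ 2 = ∑ u, transmission G u * x u ^ 2 := by
    refine Finset.sum_congr rfl fun u _ => ?_
    rw [← Finset.sum_mul, Dalpha_rowsum]
  have hB : ∑ u, ∑ v, M u v * x v ^ 2 = ∑ u, transmission G u * x u ^ 2 := by
    rw [Finset.sum_comm]
    refine Finset.sum_congr rfl fun v _ => ?_
    have : ∑ u, M u v = transmission G v := by
      rw [show ∑ u, M u v = ∑ u, M v u from
        Finset.sum_congr rfl fun u _ => Dalpha_symm G α u v, Dalpha_rowsum]
    rw [← Finset.sum_mul, this]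
  calc ∑ u, ∑ v, M u v * ((x u ^ 2 + x v ^ 2) / 2)
      = ((∑ u, ∑ v, M u v * x u ^ 2) + ∑ u, ∑ v, M u v * x v ^ 2) / 2 := by
        rw [← Finset.sum_add_distrib, Finset.sum_div]
        refine Finset.sum_congr rfl fun u _ => ?_
        rw [← Finset.sum_add_distrib, Finset.sum_div]
        exact Finset.sum_congr rfl fun v _ => by ring
    _ = ∑ u, transmission G u * x u ^ 2 := by rw [hA, hB]; ring

lemma sum_transmission (G : SimpleGraph V) : ∑ u, transmission G u = 2 * sigma G := by
  simp only [sigma, transmission]; ring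

open scoped RealInnerProductSpace in
lemma hasEigenvalue_toEuclideanLin_iff (M : Matrix V V ℝ) (μ : ℝ) :
    Module.End.HasEigenvalue (Matrix.toEuclideanLin M) μ ↔ μ ∈ spectrum ℝ M := by
  rw [← AlgEquiv.spectrum_eq (Matrix.toLinAlgEquiv' (R := ℝ) (n := V)) M,
    ← Module.End.hasEigenvalue_iff_mem_spectrum]
  constructor
  · intro h
    obtain ⟨w, hw⟩ := h.exists_hasEigenvector
    have hw1 : Matrix.toEuclideanLin M w = μ • w := Module.End.mem_eigenspace_iff.mp hw.1
    have key : M *ᵥ (WithLp.equiv 2 (V → ℝ) w) = μ • (WithLp.equiv 2 (V → ℝ) w) := by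
      have h2 := congrArg (WithLp.equiv 2 (V → ℝ)) hw1
      rw [WithLp.equiv_apply, Matrix.piLp_ofLp_toEuclideanLin, Matrix.toLin'_apply] at h2
      rw [WithLp.equiv_apply, h2]
      funext u
      simp
    refine Module.End.hasEigenvalue_of_hasEigenvector
      (x := WithLp.equiv 2 (V → ℝ) w) ⟨Module.End.mem_eigenspace_iff.mpr ?_, ?_⟩
    · simpa [Matrix.toLinAlgEquiv'_apply, Matrix.toLin'_apply] using key
    · intro h0
      exact hw.2 ((WithLp.equiv 2 (V → ℝ)).injective (by simpa using h0))
  · intro h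
    obtain ⟨v, hv⟩ := h.exists_hasEigenvector
    have hv1 : M *ᵥ v = μ • v := by
      have := Module.End.mem_eigenspace_iff.mp hv.1
      simpa [Matrix.toLinAlgEquiv'_apply, Matrix.toLin'_apply] using this
    refine Module.End.hasEigenvalue_of_hasEigenvector
      (x := (WithLp.equiv 2 (V → ℝ)).symm v) ⟨Module.End.mem_eigenspace_iff.mpr ?_, ?_⟩
    · rw [WithLp.equiv_symm_apply, Matrix.toEuclideanLin_apply_piLp_toLp, hv1]
      simp
    · intro h0
      exact hv.2 ((WithLp.equiv 2 (V → ℝ)).symm.injective (by simpa using h0))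

/-- `μ_α(G) ≥ 2σ(G)/n`, with equality iff `G` is transmission regular. -/
theorem muAlpha_ge_two_sigma_div_n (G : SimpleGraph V) (hG : G.Connected)
    (α : ℝ) (hα0 : 0 ≤ α) (hα1 : α < 1) :
    muAlpha G α ≥ 2 * sigma G / (Fintype.card V : ℝ) ∧
      (muAlpha G α = 2 * sigma G / (Fintype.card V : ℝ) ↔ TransmissionRegular G) := by
  classical
  haveI : Nonempty V := hG.nonempty
  have hα1' : α ≤ 1 := hα1.le
  set M := Dalpha G α with hMdef
  set n : ℝ := (Fintype.card V : ℝ) with hn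
  have hn0 : (0:ℝ) < n := by
    rw [hn]
    exact_mod_cast Fintype.card_pos (α := V)
  set f := Matrix.toEuclideanLin M with hf
  have hsym : f.IsSymmetric := Matrix.isHermitian_iff_isSymmetric.mp (Dalpha_isHermitian G α)
  haveI : Nonempty {x : EuclideanSpace ℝ V // x ≠ 0} := nonempty_subtype.mpr (exists_ne 0)
  -- inner product and norm formulas
  have hinner : ∀ x : EuclideanSpace ℝ V,
      (inner ℝ (f x) x : ℝ) = (WithLp.equiv 2 (V → ℝ) x) ⬝ᵥ (M *ᵥ (WithLp.equiv 2 (V → ℝ) x)) := by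
    intro x
    simp only [PiLp.inner_apply, RCLike.inner_apply, starRingEnd_apply, star_trivial,
      hf, Matrix.toEuclideanLin_apply, WithLp.equiv_apply,
      dotProduct]
  have hnorm : ∀ x : EuclideanSpace ℝ V,
      ‖x‖ ^ 2 = (WithLp.equiv 2 (V → ℝ) x) ⬝ᵥ (WithLp.equiv 2 (V → ℝ) x) := by
    intro x
    rw [← real_inner_self_eq_norm_sq, PiLp.inner_apply]
    simp [RCLike.inner_apply, dotProduct, sq]
  -- the Rayleigh quotient function
  set g : {x : EuclideanSpace ℝ V // x ≠ 0} → ℝ :=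
    fun x => (inner ℝ (f x) x : ℝ) / ‖(x : EuclideanSpace ℝ V)‖ ^ 2 with hg
  have hnormpos : ∀ x : {x : EuclideanSpace ℝ V // x ≠ 0},
      (0:ℝ) < ‖(x : EuclideanSpace ℝ V)‖ ^ 2 := by
    intro x
    have : ‖(x : EuclideanSpace ℝ V)‖ ≠ 0 := norm_ne_zero_iff.mpr x.2
    positivity
  -- bound on Rayleigh quotients
  have hray : ∀ (C : ℝ), (∀ u, transmission G u ≤ C) →
      ∀ x : {x : EuclideanSpace ℝ V // x ≠ 0}, g x ≤ C := by
    intro C hC x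
    rw [hg, div_le_iff₀ (hnormpos x)]
    rw [hinner, hnorm]
    set y := WithLp.equiv 2 (V → ℝ) (x : EuclideanSpace ℝ V) with hy
    calc y ⬝ᵥ (M *ᵥ y) ≤ ∑ u, transmission G u * y u ^ 2 :=
          Dalpha_quad_le G hα0 hα1' y
      _ ≤ ∑ u, C * y u ^ 2 := by
          refine Finset.sum_le_sum fun u _ => ?_
          exact mul_le_mul_of_nonneg_right (hC u) (sq_nonneg _)
      _ = C * (y ⬝ᵥ y) := by
          simp only [dotProduct, Finset.mul_sum]
          exact Finset.sum_congr rfl fun u _ => by ring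
  have hbdd : BddAbove (Set.range g) := by
    refine ⟨∑ u, transmission G u, ?_⟩
    rintro _ ⟨x, rfl⟩
    refine hray _ (fun u => ?_) x
    exact Finset.single_le_sum (fun v _ => transmission_nonneg G v) (Finset.mem_univ u)
  set S : ℝ := ⨆ x : {x : EuclideanSpace ℝ V // x ≠ 0}, g x with hS
  -- S is an eigenvalue
  have hEigS : Module.End.HasEigenvalue f S := by
    have h := hsym.hasEigenvalue_iSup_of_finiteDimensional
    simp only [RCLike.re_to_real, RCLike.ofReal_real_eq_id, id_eq] at h
    exact h
  -- every element of the spectrum is at most S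
  have hle : ∀ μ ∈ spectrum ℝ M, μ ≤ S := by
    intro μ hμ
    obtain ⟨w, hw⟩ := ((hasEigenvalue_toEuclideanLin_iff M μ).mpr hμ).exists_hasEigenvector
    have hw1 : f w = μ • w := Module.End.mem_eigenspace_iff.mp hw.1
    have : g ⟨w, hw.2⟩ = μ := by
      have hnz : ‖w‖ ^ 2 ≠ 0 := pow_ne_zero _ (norm_ne_zero_iff.mpr hw.2)
      simp only [hg, hw1, real_inner_smul_left, real_inner_self_eq_norm_sq]
      rw [mul_div_assoc, div_self hnz, mul_one]
    rw [← this]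
    exact le_ciSup hbdd _
  have hmu : muAlpha G α = S := by
    have hmem : S ∈ spectrum ℝ M := (hasEigenvalue_toEuclideanLin_iff M S).mp hEigS
    exact IsGreatest.csSup_eq ⟨hmem, hle⟩
  -- the all-ones vector
  set o : EuclideanSpace ℝ V := (WithLp.equiv 2 (V → ℝ)).symm (fun _ => 1) with ho
  have ho0 : o ≠ 0 := by
    intro h
    have := congrFun (congrArg (WithLp.equiv 2 (V → ℝ)) h) (Classical.arbitrary V)
    simp [ho] at this
  have hoeq : WithLp.equiv 2 (V → ℝ) o = fun _ => (1:ℝ) := by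
    simp [ho]
  have hones_dot : (fun _ => (1:ℝ)) ⬝ᵥ (M *ᵥ (fun _ => (1:ℝ))) = 2 * sigma G := by
    rw [← sum_transmission G]
    simp only [dotProduct, mulVec, one_mul]
    refine Finset.sum_congr rfl fun u _ => ?_
    rw [← Dalpha_rowsum G α u]
    simp [dotProduct, hMdef]
  have hones_norm : ((fun _ => (1:ℝ)) : V → ℝ) ⬝ᵥ ((fun _ => (1:ℝ)) : V → ℝ) = n := by
    simp [dotProduct, hn]
  have hgo : g ⟨o, ho0⟩ = 2 * sigma G / n := by
    simp only [hg]
    rw [hinner, hnorm, hoeq, hones_dot, hones_norm]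
  have hmain : 2 * sigma G / n ≤ S := by
    rw [← hgo]
    exact le_ciSup hbdd _
  refine ⟨by rw [hmu]; exact hmain, ?_, ?_⟩
  · -- equality implies transmission regular
    intro heq
    rw [hmu] at heq
    -- positive semidefinite matrix S • 1 - M
    set A : Matrix V V ℝ := S • (1 : Matrix V V ℝ) - M with hA
    have hquadS : ∀ y : V → ℝ, y ⬝ᵥ (M *ᵥ y) ≤ S * (y ⬝ᵥ y) := by
      intro y
      rcases eq_or_ne y 0 with rfl | hy
      · simp
      · have hyE : (WithLp.equiv 2 (V → ℝ)).symm y ≠ 0 := by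
          intro h
          exact hy ((WithLp.equiv 2 (V → ℝ)).symm.injective (by simpa using h))
        have h1 : g ⟨(WithLp.equiv 2 (V → ℝ)).symm y, hyE⟩ ≤ S := le_ciSup hbdd _
        simp only [hg] at h1
        rw [hinner, hnorm,
          (WithLp.equiv 2 (V → ℝ)).apply_symm_apply y] at h1
        have h3 : (0:ℝ) < y ⬝ᵥ y := by
          have h4 : (0:ℝ) ≤ y ⬝ᵥ y := Finset.sum_nonneg fun u _ => mul_self_nonneg _
          rcases h4.lt_or_eq with h | h
          · exact h
          · exfalso
            apply hy
            funext u
            have h5 : ∀ v ∈ Finset.univ, (0:ℝ) ≤ y v * y v := fun v _ => mul_self_nonneg _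
            have := (Finset.sum_eq_zero_iff_of_nonneg h5).mp h.symm u (Finset.mem_univ u)
            simp only [Pi.zero_apply]
            nlinarith [this]
        rw [div_le_iff₀ h3] at h1
        linarith
    have hpsd : A.PosSemidef := by
      rw [Matrix.posSemidef_iff_dotProduct_mulVec]
      constructor
      · refine Matrix.IsHermitian.sub ?_ (Dalpha_isHermitian G α)
        simp [Matrix.IsHermitian, Matrix.conjTranspose_smul]
      · intro y
        have := hquadS y
        simp only [hA, Matrix.sub_mulVec, Matrix.smul_mulVec, Matrix.one_mulVec,
          dotProduct_sub, dotProduct_smul, star_trivial, smul_eq_mul]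
        linarith
    have hzero : star (fun _ => (1:ℝ)) ⬝ᵥ (A *ᵥ (fun _ => (1:ℝ))) = 0 := by
      simp only [star_trivial, hA, Matrix.sub_mulVec, Matrix.smul_mulVec,
        Matrix.one_mulVec, dotProduct_sub, dotProduct_smul, smul_eq_mul]
      rw [hones_dot, hones_norm, heq]
      field_simp
      ring
    have hker := (hpsd.dotProduct_mulVec_zero_iff (fun _ => (1:ℝ))).mp hzero
    intro u v
    have hu := congrFun hker u
    have hv := congrFun hker v
    simp only [hA, Matrix.sub_mulVec, Matrix.smul_mulVec, Matrix.one_mulVec,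
      Pi.sub_apply, Pi.smul_apply, smul_eq_mul, mul_one, Pi.zero_apply] at hu hv
    have hMu : (M *ᵥ (fun _ => (1:ℝ))) u = transmission G u := by
      rw [← Dalpha_rowsum G α u]; simp [mulVec, dotProduct, hMdef]
    have hMv : (M *ᵥ (fun _ => (1:ℝ))) v = transmission G v := by
      rw [← Dalpha_rowsum G α v]; simp [mulVec, dotProduct, hMdef]
    rw [hMu] at hu
    rw [hMv] at hv
    linarith
  · -- transmission regular implies equality
    intro hTR
    set t : ℝ := transmission G (Classical.arbitrary V) with ht
    have hTall : ∀ u, transmission G u = t := fun u => hTR u (Classical.arbitrary V)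
    have hsum : 2 * sigma G = n * t := by
      rw [← sum_transmission G]
      rw [Finset.sum_congr rfl fun u _ => hTall u]
      simp [hn, mul_comm]
    have h2 : 2 * sigma G / n = t := by
      rw [hsum]; field_simp
    rw [hmu, h2]
    have hub : S ≤ t := ciSup_le (hray t (fun u => (hTall u).le))
    have hlb : t ≤ S := by rw [← h2]; exact hmain
    linarith

end DistAlpha
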